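/- Take n = 2. If f : G × G → ℂ satisfies S f = f (the theory is self-dual under gauging), then T (S (T f)) = S (T f); i.e. the manipulation ST maps any theory that is self-dual under S to a theory that is invariant under the SPT-stacking operation T. (This is the mechanism behind the duality between the enhanced symmetry categories C_S and C_T.) -/

import Mathlib

/-!
Torus partition functions of (1+1)d theories with ℤ_n×ℤ_n symmetry,
modeled as functions `GG n × GG n → ℂ` where `GG n := ZMod n × ZMod n`
records the holonomies of each ℤ_n background gauge field around the
two cycles of the torus.
-/

noncomputable section

/-- The holonomy group of one ℤ_n background gauge field on the torus. -/
abbrev GG (n : ℕ) := ZMod n × ZMod n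

/-- The intersection pairing `ε a b = a₁ b₂ - a₂ b₁`. -/
def epsPair {n : ℕ} (a b : GG n) : ZMod n := a.1 * b.2 - a.2 * b.1

/-- The character `e x = exp(2πi x.val / n)`. -/
def eChar (n : ℕ) (x : ZMod n) : ℂ :=
  Complex.exp (2 * Real.pi * Complex.I * (x.val : ℂ) / n)

/-- The gauging operation `S` on torus partition functions. -/
def gaugeS (n : ℕ) [NeZero n] (f : GG n × GG n → ℂ) : GG n × GG n → ℂ :=
  fun P => (n : ℂ)⁻¹ * (n : ℂ)⁻¹ *
    ∑ a : GG n, ∑ b : GG n, f (a, b) * eChar n (epsPair a P.2 + epsPair b P.1)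

/-- The SPT-stacking operation `T` on torus partition functions. -/
def stackT (n : ℕ) (f : GG n × GG n → ℂ) : GG n × GG n → ℂ :=
  fun P => f P * eChar n (epsPair P.1 P.2)

/-- The inverse SPT-stacking operation `T⁻¹` on torus partition functions. -/
def stackTinv (n : ℕ) (f : GG n × GG n → ℂ) : GG n × GG n → ℂ :=
  fun P => f P * eChar n (-(epsPair P.1 P.2))

/-- The torus partition function of the level-`k` ℤ_n×ℤ_n SPT phase. -/
def Zspt (n : ℕ) (k : ZMod n) : GG n × GG n → ℂ :=
  fun P => eChar n (k * epsPair P.1 P.2)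

/-!
Completing the square in the symplectic Gauss sum `∑ a b, e (ε a b) = n ^ 2` gives, for
every `n`, `S (T (S f)) = T ((S (T f)) ∘ C)`, where `C (A, B) = (A, -B)` is charge
conjugation of the second gauge field. For `n = 2` we have `C = id`, so `S f = f` gives
`T (S (T f)) = S (T (S f)) = S (T f)`.
-/

section GaussSum

variable {n : ℕ} [NeZero n]

lemma eChar_eq_stdAddChar (x : ZMod n) : eChar n x = ZMod.stdAddChar x := by
  rw [ZMod.stdAddChar_apply, ZMod.toCircle_apply, eChar]

lemma eChar_add (x y : ZMod n) : eChar n (x + y) = eChar n x * eChar n y := by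
  simp only [eChar_eq_stdAddChar, AddChar.map_add_eq_mul]

lemma sum_eChar_epsPair (a : GG n) :
    ∑ b : GG n, eChar n (epsPair a b) = if a = 0 then (n : ℂ) ^ 2 else 0 := by
  have hsplit : ∀ b : GG n, eChar n (epsPair a b) =
      ZMod.stdAddChar (b.1 * -a.2) * ZMod.stdAddChar (b.2 * a.1) := by
    intro b
    rw [eChar_eq_stdAddChar, ← AddChar.map_add_eq_mul, epsPair]
    ring_nf
  simp only [hsplit, Fintype.sum_prod_type, ← Finset.sum_mul_sum,
    AddChar.sum_mulShift _ (ZMod.isPrimitive_stdAddChar n), ZMod.card, neg_eq_zero]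
  obtain ⟨a₁, a₂⟩ := a
  by_cases h₁ : a₁ = 0 <;> by_cases h₂ : a₂ = 0 <;> simp [h₁, h₂, sq]

lemma sum_eChar_epsPair_prod : ∑ Q : GG n × GG n, eChar n (epsPair Q.1 Q.2) = (n : ℂ) ^ 2 := by
  rw [Fintype.sum_prod_type]
  simp only [sum_eChar_epsPair, Finset.sum_ite_eq', Finset.mem_univ, if_true]

lemma sum_eChar_epsPair_prod_shift (u v : GG n) :
    ∑ Q : GG n × GG n, eChar n (epsPair Q.1 Q.2 + epsPair Q.1 u + epsPair v Q.2) =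
      (n : ℂ) ^ 2 * eChar n (-epsPair v u) := by
  have hshift : ∀ a b : GG n, epsPair a b + epsPair a u + epsPair v b =
      epsPair (a + v) (b + u) + -epsPair v u := by
    intro a b
    simp only [epsPair, Prod.fst_add, Prod.snd_add]
    ring
  simp only [hshift, eChar_add, ← Finset.sum_mul]
  rw [← sum_eChar_epsPair_prod]
  exact congrArg (· * _) (Fintype.sum_equiv (Equiv.addRight (v, u)) _ _ fun _ => rfl)

lemma gaugeS_apply (f : GG n × GG n → ℂ) (P : GG n × GG n) :
    gaugeS n f P = (n : ℂ)⁻¹ * (n : ℂ)⁻¹ *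
      ∑ Q : GG n × GG n, f Q * eChar n (epsPair Q.1 P.2 + epsPair Q.2 P.1) := by
  rw [gaugeS, ← Fintype.sum_prod_type']

lemma gaugeS_stackT_gaugeS_apply (f : GG n × GG n → ℂ) (A B : GG n) :
    gaugeS n (stackT n (gaugeS n f)) (A, B) =
      (n : ℂ)⁻¹ * (n : ℂ)⁻¹ * ∑ R : GG n × GG n, f R * eChar n (-epsPair (R.1 - A) (B - R.2)) := by
  have hGauss : ∀ R : GG n × GG n, ∑ Q : GG n × GG n,
      eChar n (epsPair R.1 Q.2 + epsPair R.2 Q.1 + epsPair Q.1 Q.2 +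
        (epsPair Q.1 B + epsPair Q.2 A)) =
        (n : ℂ) ^ 2 * eChar n (-epsPair (R.1 - A) (B - R.2)) := by
    intro R
    rw [← sum_eChar_epsPair_prod_shift]
    refine Finset.sum_congr rfl fun Q _ => congrArg _ ?_
    simp only [epsPair, Prod.fst_sub, Prod.snd_sub]
    ring
  calc gaugeS n (stackT n (gaugeS n f)) (A, B)
      = (n : ℂ)⁻¹ * (n : ℂ)⁻¹ * ((n : ℂ)⁻¹ * (n : ℂ)⁻¹ * ∑ R : GG n × GG n, f R *
          ∑ Q : GG n × GG n, eChar n (epsPair R.1 Q.2 + epsPair R.2 Q.1 + epsPair Q.1 Q.2 +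
            (epsPair Q.1 B + epsPair Q.2 A))) := by
        simp only [gaugeS_apply, stackT, Finset.mul_sum, Finset.sum_mul, eChar_add]
        rw [Finset.sum_comm]
        refine Finset.sum_congr rfl fun _ _ => Finset.sum_congr rfl fun _ _ => ?_
        ring
    _ = _ := by
        simp only [hGauss, Finset.mul_sum]
        refine Finset.sum_congr rfl fun _ _ => ?_
        field_simp

lemma stackT_gaugeS_stackT_apply_neg (f : GG n × GG n → ℂ) (A B : GG n) :
    stackT n (fun P => gaugeS n (stackT n f) (P.1, -P.2)) (A, B) =
      (n : ℂ)⁻¹ * (n : ℂ)⁻¹ * ∑ R : GG n × GG n, f R * eChar n (-epsPair (R.1 - A) (B - R.2)) := by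
  have hexp : ∀ R : GG n × GG n, eChar n (-epsPair (R.1 - A) (B - R.2)) =
      eChar n (epsPair R.1 R.2) * eChar n (epsPair R.1 (-B) + epsPair R.2 A) *
        eChar n (epsPair A B) := by
    intro R
    rw [← eChar_add, ← eChar_add]
    congr 1
    simp only [epsPair, Prod.fst_sub, Prod.snd_sub, Prod.fst_neg, Prod.snd_neg]
    ring
  simp only [gaugeS_apply, stackT, hexp, Finset.mul_sum, Finset.sum_mul]
  refine Finset.sum_congr rfl fun _ _ => ?_
  ring

theorem gaugeS_stackT_gaugeS (f : GG n × GG n → ℂ) :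
    gaugeS n (stackT n (gaugeS n f)) =
      stackT n (fun P => gaugeS n (stackT n f) (P.1, -P.2)) := by
  funext ⟨A, B⟩
  rw [gaugeS_stackT_gaugeS_apply, stackT_gaugeS_stackT_apply_neg]

end GaussSum

theorem gaugeS_stackT_gaugeS_two (f : GG 2 × GG 2 → ℂ) :
    gaugeS 2 (stackT 2 (gaugeS 2 f)) = stackT 2 (gaugeS 2 (stackT 2 f)) := by
  have hneg : ∀ B : GG 2, -B = B := fun B =>
    Prod.ext (ZMod.neg_eq_self_mod_two _) (ZMod.neg_eq_self_mod_two _)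
  simp only [gaugeS_stackT_gaugeS, hneg]

/-- for n = 2, the manipulation `ST` maps any theory that is
self-dual under gauging `S` to a theory that is invariant under the
SPT-stacking operation `T`. -/
theorem ST_maps_S_selfdual_to_T_selfdual (f : GG 2 × GG 2 → ℂ)
    (hf : gaugeS 2 f = f) :
    stackT 2 (gaugeS 2 (stackT 2 f)) = gaugeS 2 (stackT 2 f) := by
  rw [← gaugeS_stackT_gaugeS_two, hf]

end
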